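/- arXiv:2501.11127 — 8 statements merged into one kernel-verified Lean document; each statement's English description precedes it below -/
import Mathlib

section
/- Let K ⊆ ℝ^d be convex with K contained in the closed Euclidean ball of radius R > 0 centered at the origin, let f : K → ℝ be convex with a minimizer x⋆ ∈ K, let β > 0 and 1 < ℓ ≤ 2, and suppose that the map x ↦ f(x) − β‖x − x⋆‖₂^ℓ is convex on K. Then for all x ∈ K, f(x) − f(x⋆) ≥ β(2R)^{ℓ−2}‖x − x⋆‖₂²; in particular, f has the 2β(2R)^{ℓ−2}-quadratic growth property on K. -/
/-- If `K ⊆ closedBall 0 R` is convex, `f` is convex on `K` with minimizer `x⋆`,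
`β > 0`, `1 < ℓ ≤ 2` and `x ↦ f x − β‖x − x⋆‖₂^ℓ` is convex on `K`, then
`f x − f x⋆ ≥ β (2R)^{ℓ−2} ‖x − x⋆‖₂²` on `K`; in particular `f` has the
`2β(2R)^{ℓ−2}`-quadratic growth property on `K` (the minimizer is unique). -/
theorem stmt_2 (d : ℕ) (K : Set (EuclideanSpace ℝ (Fin d))) (hK : Convex ℝ K)
    (R : ℝ) (hR : 0 < R) (hKR : K ⊆ Metric.closedBall 0 R)
    (f : EuclideanSpace ℝ (Fin d) → ℝ) (hf : ConvexOn ℝ K f)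
    (xs : EuclideanSpace ℝ (Fin d)) (hxs : xs ∈ K) (hmin : ∀ x ∈ K, f xs ≤ f x)
    (β ℓ : ℝ) (hβ : 0 < β) (hℓ1 : 1 < ℓ) (hℓ2 : ℓ ≤ 2)
    (hconv : ConvexOn ℝ K (fun x => f x - β * ‖x - xs‖ ^ ℓ)) :
    (∀ x ∈ K, f x - f xs ≥ β * (2 * R) ^ (ℓ - 2) * ‖x - xs‖ ^ 2) ∧
    (∀ y ∈ K, (∀ x ∈ K, f y ≤ f x) → y = xs) := by
  have key : ∀ x ∈ K, β * ‖x - xs‖ ^ ℓ ≤ f x - f xs := by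
    intro x hx
    set r := ‖x - xs‖ with hrdef
    have hr0 : 0 ≤ r := norm_nonneg _
    have hstep : ∀ t : ℝ, t ∈ Set.Ioo (0:ℝ) 1 →
        β * (1 - t ^ (ℓ - 1)) * r ^ ℓ ≤ f x - f xs := by
      intro t ht
      obtain ⟨ht0, ht1⟩ := ht
      have h1t : (0:ℝ) ≤ 1 - t := by linarith
      have hz : (1 - t) • xs + t • x ∈ K := hK hxs hx h1t ht0.le (by ring)
      have hcv := hconv.2 hxs hx h1t ht0.le (by ring : (1 - t) + t = 1)
      set z := (1 - t) • xs + t • x with hzdef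
      have hzsub : z - xs = t • (x - xs) := by
        rw [hzdef, sub_smul, one_smul, smul_sub]; abel
      have hnz : ‖z - xs‖ = t * r := by
        rw [hzsub, norm_smul, Real.norm_eq_abs, abs_of_pos ht0]
      have hℓ0 : ℓ ≠ 0 := by linarith
      have hzero : ‖xs - xs‖ ^ ℓ = 0 := by
        simp [Real.zero_rpow hℓ0]
      have htr : (t * r) ^ ℓ = t ^ ℓ * r ^ ℓ := Real.mul_rpow ht0.le hr0
      simp only [hnz, htr, hzero, smul_eq_mul, mul_zero, sub_zero, ← hrdef] at hcv
      have hfz : f xs ≤ f z := hmin z hz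
      have htl : t ^ ℓ = t * t ^ (ℓ - 1) := by
        conv_lhs => rw [show ℓ = 1 + (ℓ - 1) by ring]
        rw [Real.rpow_add ht0, Real.rpow_one]
      rw [htl] at hcv
      have hmul : t * (β * (1 - t ^ (ℓ - 1)) * r ^ ℓ) ≤ t * (f x - f xs) := by
        nlinarith [hcv, hfz]
      exact le_of_mul_le_mul_left hmul ht0
    have hten : Filter.Tendsto (fun t : ℝ => β * (1 - t ^ (ℓ - 1)) * r ^ ℓ)
        (nhdsWithin 0 (Set.Ioi 0)) (nhds (β * (1 - (0:ℝ) ^ (ℓ - 1)) * r ^ ℓ)) := by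
      have hc : ContinuousAt (fun t : ℝ => β * (1 - t ^ (ℓ - 1)) * r ^ ℓ) 0 := by
        have h1 : ContinuousAt (fun t : ℝ => t ^ (ℓ - 1)) 0 :=
          Real.continuousAt_rpow_const 0 (ℓ - 1) (Or.inr (by linarith))
        fun_prop
      exact hc.continuousWithinAt
    have hz0 : (0:ℝ) ^ (ℓ - 1) = 0 := Real.zero_rpow (by linarith)
    have hmem : Set.Ioo (0:ℝ) 1 ∈ nhdsWithin (0:ℝ) (Set.Ioi 0) :=
      Ioo_mem_nhdsGT_of_mem ⟨le_refl 0, one_pos⟩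
    have := le_of_tendsto hten (Filter.eventually_of_mem hmem hstep)
    rw [hz0] at this
    linarith [this]
  have h2R : (0:ℝ) < 2 * R := by linarith
  have hcoef : (0:ℝ) < β * (2 * R) ^ (ℓ - 2) :=
    mul_pos hβ (Real.rpow_pos_of_pos h2R _)
  have growth : ∀ x ∈ K, f x - f xs ≥ β * (2 * R) ^ (ℓ - 2) * ‖x - xs‖ ^ 2 := by
    intro x hx
    rcases eq_or_lt_of_le (norm_nonneg (x - xs)) with h0 | h0
    · rw [← h0]
      have := hmin x hx
      norm_num
      linarith
    · have hle : ‖x - xs‖ ≤ 2 * R := by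
        have hx' := hKR hx
        have hxs' := hKR hxs
        rw [Metric.mem_closedBall, dist_zero_right] at hx' hxs'
        calc ‖x - xs‖ ≤ ‖x‖ + ‖xs‖ := norm_sub_le _ _
          _ ≤ 2 * R := by linarith
      have hmono : (2 * R) ^ (ℓ - 2) ≤ ‖x - xs‖ ^ (ℓ - 2) :=
        Real.rpow_le_rpow_of_nonpos h0 hle (by linarith)
      have hid : ‖x - xs‖ ^ (ℓ - 2) * ‖x - xs‖ ^ 2 = ‖x - xs‖ ^ ℓ := by
        rw [show (‖x - xs‖ ^ (2:ℕ)) = ‖x - xs‖ ^ ((2:ℕ):ℝ) from (Real.rpow_natCast _ 2).symm,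
          ← Real.rpow_add h0]
        norm_num
      have hk := key x hx
      have hsq : (0:ℝ) ≤ ‖x - xs‖ ^ 2 := by positivity
      nlinarith [mul_le_mul_of_nonneg_right hmono hsq]
  refine ⟨growth, ?_⟩
  intro y hy hymin
  have h1 := growth y hy
  have h2 : f y = f xs := le_antisymm (hymin xs hxs) (hmin y hy)
  have h3 : ‖y - xs‖ ^ 2 ≤ 0 := by
    nlinarith [h1, hcoef]
  have h4 : ‖y - xs‖ = 0 := by nlinarith [norm_nonneg (y - xs), sq_nonneg ‖y - xs‖]
  have := norm_eq_zero.mp h4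
  exact sub_eq_zero.mp this
end

section
/- Let d ≥ 1, let f : ℝ^d → ℝ, let β > 0, and let x⋆ be a minimizer of f over ℝ^d with ‖x⋆‖₂ ≤ 1. Suppose that (i) the map x ↦ f(x) − β‖x − x⋆‖₂ is convex on ℝ^d, (ii) f is symmetric with respect to x⋆, i.e., f(x⋆ + x) = f(x⋆ − x) for all x ∈ ℝ^d, and (iii) |f(x)| ≤ 1 for all x with ‖x‖₂ ≤ 1. Then f(x) ≥ f(x⋆) + β‖x − x⋆‖₂ for all x ∈ ℝ^d, and β ≤ 2. -/
/-- If `f : ℝ^d → ℝ` has minimizer `x⋆` with `‖x⋆‖ ≤ 1`, `x ↦ f x − β‖x − x⋆‖` is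
convex on `ℝ^d`, `f` is symmetric about `x⋆`, and `|f| ≤ 1` on the unit ball, then
`f x ≥ f x⋆ + β‖x − x⋆‖` for all `x`, and `β ≤ 2`. -/
theorem stmt_3 (d : ℕ) (hd : 1 ≤ d) (f : EuclideanSpace ℝ (Fin d) → ℝ)
    (β : ℝ) (hβ : 0 < β)
    (xs : EuclideanSpace ℝ (Fin d)) (hxs : ‖xs‖ ≤ 1)
    (hmin : ∀ x, f xs ≤ f x)
    (hconv : ConvexOn ℝ Set.univ (fun x => f x - β * ‖x - xs‖))
    (hsymm : ∀ x, f (xs + x) = f (xs - x))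
    (hbound : ∀ x, ‖x‖ ≤ 1 → |f x| ≤ 1) :
    (∀ x, f x ≥ f xs + β * ‖x - xs‖) ∧ β ≤ 2 := by
  have h1 : ∀ x, f x ≥ f xs + β * ‖x - xs‖ := by
    intro x
    have hc := hconv.2 (Set.mem_univ (xs + (x - xs))) (Set.mem_univ (xs - (x - xs)))
      (by norm_num : (0:ℝ) ≤ 1/2) (by norm_num : (0:ℝ) ≤ 1/2) (by norm_num : (1:ℝ)/2 + 1/2 = 1)
    have hmid : (1/2:ℝ) • (xs + (x - xs)) + (1/2:ℝ) • (xs - (x - xs)) = xs := by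
      module
    rw [hmid] at hc
    simp only at hc
    have hsx : f (xs - (x - xs)) = f (xs + (x - xs)) := (hsymm _).symm
    have he : xs + (x - xs) = x := by abel
    have hn : ‖xs - (x - xs) - xs‖ = ‖x - xs‖ := by
      have : xs - (x - xs) - xs = -(x - xs) := by abel
      rw [this, norm_neg]
    rw [he] at hc hsx
    rw [hsx, hn] at hc
    have h0 : ‖xs - xs‖ = 0 := by simp
    rw [h0] at hc
    simp only [smul_eq_mul] at hc
    linarith
  refine ⟨h1, ?_⟩
  by_cases hz : xs = 0
  · have hdpos : 0 < d := hd
    set e : EuclideanSpace ℝ (Fin d) := EuclideanSpace.single ⟨0, hdpos⟩ (1:ℝ) with he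
    have hne : ‖e‖ = 1 := by
      rw [he, EuclideanSpace.norm_single]; norm_num
    have h2 := h1 e
    have hn : ‖e - xs‖ = 1 := by rw [hz, sub_zero, hne]
    rw [hn] at h2
    have hb1 : |f e| ≤ 1 := hbound e (by rw [hne])
    have hb2 : |f xs| ≤ 1 := hbound xs hxs
    rw [abs_le] at hb1 hb2
    linarith
  · have hnz : 0 < ‖xs‖ := norm_pos_iff.mpr hz
    set y : EuclideanSpace ℝ (Fin d) := (-(1/‖xs‖)) • xs with hy
    have hny : ‖y‖ = 1 := by
      rw [hy, norm_smul, Real.norm_eq_abs, abs_neg, abs_of_pos (by positivity)]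
      field_simp
    have hsub : y - xs = (-(1/‖xs‖) - 1) • xs := by
      rw [hy, sub_smul, one_smul]
    have hnsub : ‖y - xs‖ = 1 + ‖xs‖ := by
      rw [hsub, norm_smul, Real.norm_eq_abs]
      have hpos : 0 < 1/‖xs‖ := by positivity
      have : |(-(1/‖xs‖) - 1)| = 1/‖xs‖ + 1 := by
        rw [abs_of_neg (by linarith : -(1/‖xs‖) - 1 < 0)]
        ring
      rw [this]
      field_simp
    have h2 := h1 y
    rw [hnsub] at h2
    have hb1 : |f y| ≤ 1 := hbound y (le_of_eq hny)
    have hb2 : |f xs| ≤ 1 := hbound xs hxs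
    rw [abs_le] at hb1 hb2
    nlinarith [norm_nonneg xs]
end

section
/- Let K ⊆ ℝ^d be a convex set with closedBall(0, r) ⊆ K ⊆ closedBall(0, R) for some 0 < r ≤ R, let π(x) = inf{t > 0 : x ∈ tK} be the Minkowski functional (gauge) of K, and set π⁺(x) = max(1, π(x)). Then for every x⋆ ∈ K and every x ∈ ℝ^d, ‖x − π⁺(x)·x⋆‖₂ ≤ (1 + R/r)·‖x − x⋆‖₂. -/
/-- For a convex body `K` with `closedBall 0 r ⊆ K ⊆ closedBall 0 R`, Minkowski
functional `gauge K` and `π⁺ x = max 1 (gauge K x)`, every `x⋆ ∈ K` and `x ∈ ℝ^d`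
satisfy `‖x − π⁺(x)·x⋆‖ ≤ (1 + R/r)·‖x − x⋆‖`. -/
theorem stmt_4 (d : ℕ) (K : Set (EuclideanSpace ℝ (Fin d))) (hK : Convex ℝ K)
    (r R : ℝ) (hr : 0 < r) (hrR : r ≤ R)
    (hK1 : Metric.closedBall 0 r ⊆ K) (hK2 : K ⊆ Metric.closedBall 0 R) :
    ∀ xs ∈ K, ∀ x : EuclideanSpace ℝ (Fin d),
      ‖x - max 1 (gauge K x) • xs‖ ≤ (1 + R / r) * ‖x - xs‖ := by
  intro xs hxs x
  have habs : Absorbent ℝ K := absorbent_nhds_zero (Filter.mem_of_superset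
    (Metric.closedBall_mem_nhds 0 hr) hK1)
  have hball : Absorbent ℝ (Metric.ball (0 : EuclideanSpace ℝ (Fin d)) r) :=
    absorbent_ball_zero hr
  set π : ℝ := max 1 (gauge K x) with hπ
  have hπ1 : 1 ≤ π := le_max_left _ _
  -- gauge K (x - xs) ≤ ‖x - xs‖ / r
  have hgd : gauge K (x - xs) ≤ ‖x - xs‖ / r := by
    have := gauge_mono hball (Metric.ball_subset_closedBall.trans hK1) (x - xs)
    rwa [gauge_ball hr.le] at this
  have hgxs : gauge K xs ≤ 1 := gauge_le_one_of_mem hxs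
  have hgx : gauge K x ≤ 1 + ‖x - xs‖ / r := by
    calc gauge K x = gauge K (xs + (x - xs)) := by rw [add_sub_cancel]
      _ ≤ gauge K xs + gauge K (x - xs) := gauge_add_le hK habs _ _
      _ ≤ 1 + ‖x - xs‖ / r := add_le_add hgxs hgd
  have hπle : π - 1 ≤ ‖x - xs‖ / r := by
    rcases max_cases 1 (gauge K x) with ⟨h, _⟩ | ⟨h, _⟩
    · simp [hπ, h]
      positivity
    · simp only [hπ, h]; linarith
  have hxsR : ‖xs‖ ≤ R := by simpa using hK2 hxs
  have key : ‖x - π • xs‖ ≤ ‖x - xs‖ + (π - 1) * ‖xs‖ := by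
    have : x - π • xs = (x - xs) - (π - 1) • xs := by
      rw [sub_smul, one_smul]; abel
    rw [this]
    calc ‖(x - xs) - (π - 1) • xs‖ ≤ ‖x - xs‖ + ‖(π - 1) • xs‖ := norm_sub_le _ _
      _ = ‖x - xs‖ + |π - 1| * ‖xs‖ := by rw [norm_smul, Real.norm_eq_abs]
      _ = ‖x - xs‖ + (π - 1) * ‖xs‖ := by rw [abs_of_nonneg (by linarith)]
  have h2 : (π - 1) * ‖xs‖ ≤ (‖x - xs‖ / r) * R :=
    mul_le_mul hπle hxsR (norm_nonneg _) (by positivity)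
  calc ‖x - π • xs‖ ≤ ‖x - xs‖ + (π - 1) * ‖xs‖ := key
    _ ≤ ‖x - xs‖ + (‖x - xs‖ / r) * R := by linarith
    _ = (1 + R / r) * ‖x - xs‖ := by field_simp
end

section
/- Let g : ℝ → ℝ be monotonically increasing, let X be a standard Gaussian random variable (X ~ N(0,1)), assume E[|X·g(X)|] < ∞, and let h : ℝ → ℝ be measurable such that for Lebesgue-almost every x ∈ ℝ, g is differentiable at x with derivative g′(x) = h(x). Then E[h(X)] ≤ E[X·g(X)], where the left-hand expectation is well-defined in [0,∞] since h ≥ 0 almost everywhere. -/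
/-!
Let `μ` be the Stieltjes measure of `g`. By Lebesgue's differentiation theorem `h = dμ/dx` almost
everywhere, so `E[h(X)] = ∫ h φ dx ≤ ∫ φ dμ`, the singular part of `μ` only adding mass. The
standard Gaussian density satisfies `φ(t) = ∫ |x| φ(x) dx` over the `x` such that `t` lies strictly
between `0` and `x`, so by Tonelli `∫ φ dμ = E[|X| μ(between 0 and X)] ≤ E[|X| |g(X) - g(0)|]`,
and the last expectation is `E[X (g(X) - g(0))] = E[X g(X)]` because `E[X] = 0`.
-/

open MeasureTheory ProbabilityTheory Set Filter Topology
open scoped ENNReal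

lemma gaussianPDFReal_zero_one :
    gaussianPDFReal 0 1 = fun x => (√(2 * Real.pi))⁻¹ * Real.exp (-x ^ 2 / 2) := by
  ext x; rw [gaussianPDFReal]; norm_num

lemma hasDerivAt_gaussianPDFReal_zero_one (x : ℝ) :
    HasDerivAt (gaussianPDFReal 0 1) (-x * gaussianPDFReal 0 1 x) x := by
  have hexp : HasDerivAt (fun y : ℝ => -y ^ 2 / 2) (-x) x :=
    ((hasDerivAt_pow 2 x).neg.div_const 2).congr_deriv (by push_cast; ring)
  rw [gaussianPDFReal_zero_one]
  exact (hexp.exp.const_mul (√(2 * Real.pi))⁻¹).congr_deriv (by ring)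

lemma integrable_mul_gaussianPDFReal_zero_one :
    Integrable (fun x => x * gaussianPDFReal 0 1 x) := by
  refine ((integrable_mul_exp_neg_mul_sq (b := 1 / 2) (by norm_num)).const_mul
    (√(2 * Real.pi))⁻¹).congr (ae_of_all _ fun x => ?_)
  simp only [gaussianPDFReal_zero_one]; ring_nf

lemma integral_Ioi_mul_gaussianPDFReal_zero_one (t : ℝ) :
    ∫ x in Ioi t, x * gaussianPDFReal 0 1 x = gaussianPDFReal 0 1 t := by
  have hderiv (x : ℝ) :
      HasDerivAt (fun y => -gaussianPDFReal 0 1 y) (x * gaussianPDFReal 0 1 x) x :=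
    (hasDerivAt_gaussianPDFReal_zero_one x).neg.congr_deriv (by ring)
  have htendsto : Tendsto (gaussianPDFReal 0 1) atTop (𝓝 0) :=
    tendsto_zero_of_hasDerivAt_of_integrableOn_Ioi (a := 0)
      (fun x _ => hasDerivAt_gaussianPDFReal_zero_one x)
      (by simpa using integrable_mul_gaussianPDFReal_zero_one.neg.integrableOn)
      (integrable_gaussianPDFReal 0 1).integrableOn
  simpa using integral_Ioi_of_hasDerivAt_of_tendsto (m := 0)
    (hderiv t).continuousAt.continuousWithinAt (fun x _ => hderiv x)
    integrable_mul_gaussianPDFReal_zero_one.integrableOn (by simpa using htendsto.neg)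

lemma setLIntegral_Ioi_ofReal_gaussianReal {t : ℝ} (ht : 0 ≤ t) :
    ∫⁻ x in Ioi t, ENNReal.ofReal x ∂gaussianReal 0 1 = gaussianPDF 0 1 t := by
  rw [gaussianReal_of_var_ne_zero 0 one_ne_zero,
    setLIntegral_withDensity_eq_setLIntegral_mul _ (measurable_gaussianPDF 0 1)
      ENNReal.measurable_ofReal measurableSet_Ioi, gaussianPDF,
    ← integral_Ioi_mul_gaussianPDFReal_zero_one t,
    ofReal_integral_eq_lintegral_ofReal integrable_mul_gaussianPDFReal_zero_one.integrableOn
      ((ae_restrict_iff' measurableSet_Ioi).2 (ae_of_all _ fun x hx =>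
        mul_nonneg (ht.trans hx.out.le) (gaussianPDFReal_nonneg 0 1 x)))]
  refine setLIntegral_congr_fun measurableSet_Ioi fun x _ => ?_
  simp only [Pi.mul_apply, gaussianPDF, ← ENNReal.ofReal_mul (gaussianPDFReal_nonneg 0 1 x),
    mul_comm]

lemma setLIntegral_Iio_ofReal_neg_gaussianReal {t : ℝ} (ht : t ≤ 0) :
    ∫⁻ x in Iio t, ENNReal.ofReal (-x) ∂gaussianReal 0 1 = gaussianPDF 0 1 t := by
  have hsymm : (gaussianReal 0 1).map (fun x => -x) = gaussianReal 0 1 := by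
    simpa using gaussianReal_map_neg (μ := 0) (v := 1)
  rw [← hsymm, setLIntegral_map measurableSet_Iio (by fun_prop) (by fun_prop)]
  simpa [gaussianPDF, gaussianPDFReal] using
    setLIntegral_Ioi_ofReal_gaussianReal (neg_nonneg.2 ht)

lemma mem_uIoo_zero_iff_of_pos {t x : ℝ} (ht : 0 < t) : t ∈ uIoo 0 x ↔ t < x := by
  simp [uIoo, ht.le, ht]

lemma mem_uIoo_zero_iff_of_neg {t x : ℝ} (ht : t < 0) : t ∈ uIoo 0 x ↔ x < t := by
  simp [uIoo, ht.le, ht]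

lemma lintegral_indicator_uIoo_gaussianReal {t : ℝ} (ht : t ≠ 0) :
    ∫⁻ x, (uIoo 0 x).indicator (fun _ => ENNReal.ofReal |x|) t ∂gaussianReal 0 1 =
      gaussianPDF 0 1 t := by
  rcases ht.lt_or_gt with ht | ht
  · rw [← setLIntegral_Iio_ofReal_neg_gaussianReal ht.le,
      ← lintegral_indicator measurableSet_Iio]
    congr 1 with x
    by_cases hx : x < t
    · simp [mem_uIoo_zero_iff_of_neg ht, hx, abs_of_neg (hx.trans ht)]
    · simp [mem_uIoo_zero_iff_of_neg ht, hx]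
  · rw [← setLIntegral_Ioi_ofReal_gaussianReal ht.le,
      ← lintegral_indicator measurableSet_Ioi]
    congr 1 with x
    by_cases hx : t < x
    · simp [mem_uIoo_zero_iff_of_pos ht, hx, abs_of_pos (ht.trans hx)]
    · simp [mem_uIoo_zero_iff_of_pos ht, hx]

lemma measurable_indicator_uIoo_zero :
    Measurable (Function.uncurry fun t x : ℝ =>
      (uIoo 0 x).indicator (fun _ => ENNReal.ofReal |x|) t) := by
  change Measurable ({p : ℝ × ℝ | p.1 ∈ uIoo 0 p.2}.indicator fun p => ENNReal.ofReal |p.2|)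
  exact Measurable.indicator (by fun_prop) ((measurableSet_lt (by fun_prop) measurable_fst).inter
    (measurableSet_lt measurable_fst (by fun_prop)))

lemma Monotone.sub_mul_sub_nonneg {g : ℝ → ℝ} (hg : Monotone g) (a x : ℝ) :
    0 ≤ (x - a) * (g x - g a) := by
  rcases le_total a x with hax | hxa
  · exact mul_nonneg (sub_nonneg.2 hax) (sub_nonneg.2 (hg hax))
  · exact mul_nonneg_of_nonpos_of_nonpos (sub_nonpos.2 hxa) (sub_nonpos.2 (hg hxa))

lemma Monotone.stieltjesFunction_measure_Ioo_le {g : ℝ → ℝ} (hg : Monotone g) (a b : ℝ) :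
    hg.stieltjesFunction.measure (Ioo a b) ≤ ENNReal.ofReal (g b - g a) := by
  have hleft : Function.leftLim hg.stieltjesFunction b = Function.leftLim g b :=
    leftLim_rightLim (hg.tendsto_leftLim b)
  rw [StieltjesFunction.measure_Ioo, hleft, hg.stieltjesFunction_eq]
  exact ENNReal.ofReal_le_ofReal (sub_le_sub (hg.leftLim_le le_rfl) (hg.le_rightLim le_rfl))

lemma Monotone.stieltjesFunction_measure_uIoo_le {g : ℝ → ℝ} (hg : Monotone g) (a b : ℝ) :
    hg.stieltjesFunction.measure (uIoo a b) ≤ ENNReal.ofReal |g b - g a| := by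
  rw [uIoo, ← max_sub_min_eq_abs, ← hg.map_max, ← hg.map_min]
  exact hg.stieltjesFunction_measure_Ioo_le _ _

lemma Monotone.lintegral_lintegral_indicator_uIoo_le {g : ℝ → ℝ} (hg : Monotone g)
    (ν : Measure ℝ) [SFinite ν] :
    ∫⁻ t, ∫⁻ x, (uIoo 0 x).indicator (fun _ => ENNReal.ofReal |x|) t ∂ν
        ∂hg.stieltjesFunction.measure ≤ ∫⁻ x, ENNReal.ofReal (x * (g x - g 0)) ∂ν := by
  rw [lintegral_lintegral_swap measurable_indicator_uIoo_zero.aemeasurable]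
  refine lintegral_mono fun x => ?_
  rw [lintegral_indicator_const (s := uIoo 0 x) measurableSet_Ioo]
  calc ENNReal.ofReal |x| * hg.stieltjesFunction.measure (uIoo 0 x)
      ≤ ENNReal.ofReal |x| * ENNReal.ofReal |g x - g 0| := by
        gcongr; exact hg.stieltjesFunction_measure_uIoo_le 0 x
    _ = ENNReal.ofReal (x * (g x - g 0)) := by
        rw [← ENNReal.ofReal_mul (abs_nonneg x), ← abs_mul,
          abs_of_nonneg (by simpa using hg.sub_mul_sub_nonneg 0 x)]

lemma lintegral_rnDeriv_mul_le {α : Type*} [MeasurableSpace α] (μ ν : Measure α)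
    [SigmaFinite μ] (f : α → ℝ≥0∞) : ∫⁻ x, μ.rnDeriv ν x * f x ∂ν ≤ ∫⁻ x, f x ∂μ :=
  calc ∫⁻ x, μ.rnDeriv ν x * f x ∂ν = ∫⁻ x, f x ∂ν.withDensity (μ.rnDeriv ν) :=
        (lintegral_withDensity_eq_lintegral_mul_non_measurable ν (μ.measurable_rnDeriv ν)
          (μ.rnDeriv_lt_top ν) f).symm
    _ ≤ ∫⁻ x, f x ∂μ := lintegral_mono' (μ.withDensity_rnDeriv_le ν) le_rfl

lemma Monotone.ofReal_ae_eq_rnDeriv {g h : ℝ → ℝ} (hg : Monotone g)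
    (hderiv : ∀ᵐ x, HasDerivAt g (h x) x) :
    (fun x => ENNReal.ofReal (h x)) =ᵐ[volume] hg.stieltjesFunction.measure.rnDeriv volume := by
  filter_upwards [hderiv, hg.ae_hasDerivAt,
    Measure.rnDeriv_lt_top hg.stieltjesFunction.measure volume] with x hh hrn hfin
  rw [hh.unique hrn, ENNReal.ofReal_toReal hfin.ne]

lemma Monotone.lintegral_ofReal_mul_sub_gaussianReal {g : ℝ → ℝ} (hg : Monotone g)
    (hint : Integrable (fun x => x * g x) (gaussianReal 0 1)) :
    ∫⁻ x, ENNReal.ofReal (x * (g x - g 0)) ∂gaussianReal 0 1 =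
      ENNReal.ofReal (∫ x, x * g x ∂gaussianReal 0 1) := by
  have hid : Integrable (fun x => x) (gaussianReal 0 1) :=
    (memLp_id_gaussianReal 1).integrable le_rfl
  have hsub : Integrable (fun x => x * g x - x * g 0) (gaussianReal 0 1) :=
    hint.sub (hid.mul_const (g 0))
  have hnonneg : 0 ≤ᵐ[gaussianReal 0 1] fun x => x * g x - x * g 0 :=
    ae_of_all _ fun x => by simpa [mul_sub] using hg.sub_mul_sub_nonneg 0 x
  simp_rw [mul_sub]
  rw [← ofReal_integral_eq_lintegral_ofReal hsub hnonneg,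
    integral_sub hint (hid.mul_const (g 0)), integral_mul_const, integral_id_gaussianReal]
  simp

theorem stmt_9_general (g h : ℝ → ℝ) (hg : Monotone g)
    (hderiv : ∀ᵐ x ∂(volume : Measure ℝ), HasDerivAt g (h x) x)
    (hint : Integrable (fun x => x * g x) (gaussianReal 0 1)) :
    (∫⁻ x, ENNReal.ofReal (h x) ∂gaussianReal 0 1) ≤
      ENNReal.ofReal (∫ x, x * g x ∂gaussianReal 0 1) := by
  set μ := hg.stieltjesFunction.measure
  set τ := fun t => ∫⁻ x, (uIoo 0 x).indicator (fun _ => ENNReal.ofReal |x|) t ∂gaussianReal 0 1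
  have hτ : τ =ᵐ[volume] gaussianPDF 0 1 := by
    filter_upwards [volume.ae_ne 0] with t ht using lintegral_indicator_uIoo_gaussianReal ht
  calc ∫⁻ x, ENNReal.ofReal (h x) ∂gaussianReal 0 1
      = ∫⁻ t, μ.rnDeriv volume t * τ t := by
        rw [gaussianReal_of_var_ne_zero 0 one_ne_zero,
          lintegral_withDensity_eq_lintegral_mul_non_measurable _ (measurable_gaussianPDF 0 1)
            (ae_of_all _ fun _ => gaussianPDF_lt_top)]
        refine lintegral_congr_ae ?_
        filter_upwards [hτ, hg.ofReal_ae_eq_rnDeriv hderiv] with t hτt hrn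
        rw [Pi.mul_apply, hτt, hrn, mul_comm]
    _ ≤ ∫⁻ t, τ t ∂μ := lintegral_rnDeriv_mul_le μ volume τ
    _ ≤ ∫⁻ x, ENNReal.ofReal (x * (g x - g 0)) ∂gaussianReal 0 1 :=
        hg.lintegral_lintegral_indicator_uIoo_le _
    _ = ENNReal.ofReal (∫ x, x * g x ∂gaussianReal 0 1) :=
        hg.lintegral_ofReal_mul_sub_gaussianReal hint

/-- Stein's lemma for monotone functions: if `g : ℝ → ℝ` is monotonically increasing,
`X ~ N(0,1)`, `E[|X g(X)|] < ∞`, and `h` is a measurable a.e. derivative of `g`, then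
`E[h(X)] ≤ E[X g(X)]`, the left-hand side being well-defined in `[0,∞]`. -/
theorem stmt_9 (g h : ℝ → ℝ) (hg : Monotone g) (hmeas : Measurable h)
    (hderiv : ∀ᵐ x ∂(volume : Measure ℝ), HasDerivAt g (h x) x)
    (hint : Integrable (fun x => x * g x) (gaussianReal 0 1)) :
    (∫⁻ x, ENNReal.ofReal (h x) ∂gaussianReal 0 1) ≤
      ENNReal.ofReal (∫ x, x * g x ∂gaussianReal 0 1) :=
  stmt_9_general g h hg hderiv hint
end

section
/- Let d ≥ 1, let 1 < p ≤ 2, and let x ∈ ℝ^d have all coordinates nonzero (x_i ≠ 0 for every i). Then the function F : ℝ^d → ℝ, F(y) = ‖y‖_p, is twice differentiable at x, and its Hessian H(x) satisfies, in the positive semidefinite order, H(x) ⪰ (p − 1)·d^{−3(2−p)/(2p)}·‖x‖₂^{−1}·(I_d − x·xᵀ/‖x‖₂²). -/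
/-!
Along a line `t ↦ x + t • u` the function `‖·‖_p` is a composition of one-variable functions,
which gives the Hessian form `(p - 1) S^(1/p - 2) (S W - G²)` with `S = ∑ |xᵢ|^p`,
`W = ∑ |xᵢ|^(p-2) uᵢ²` and `G = ∑ |xᵢ|^(p-2) xᵢ uᵢ`. The weighted Lagrange identity writes
`S W - G² = S ∑ |xᵢ|^(p-2) (uᵢ - T xᵢ)²` with `T = G / S`. As `|xᵢ| ≤ ‖x‖₂` and `p ≤ 2`, every
weight is at least `‖x‖₂^(p-2)`, and `‖u - T x‖₂² ≥ ‖u‖₂² - ⟪x, u⟫² / ‖x‖₂²`. Finally the power-mean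
inequality `‖x‖_p ≤ d^(1/p - 1/2) ‖x‖₂` bounds `S^(1/p - 1)` from below.
-/

open Filter Topology

theorem fderiv_fderiv_apply_apply_of_hasDerivAt {E : Type*} [NormedAddCommGroup E]
    [NormedSpace ℝ E] {f φ : E → ℝ} {x u : E} {D : ℝ} (hf : ContDiffAt ℝ 2 f x)
    (hφ : ∀ᶠ y in 𝓝 x, HasDerivAt (fun s : ℝ => f (y + s • u)) (φ y) 0)
    (hD : HasDerivAt (fun t : ℝ => φ (x + t • u)) D 0) :
    fderiv ℝ (fderiv ℝ f) x u u = D := by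
  have hline : ∀ y : E, HasDerivAt (fun s : ℝ => y + s • u) u 0 := fun y => by
    simpa using ((hasDerivAt_id (0 : ℝ)).smul_const u).const_add y
  have hdir : ∀ᶠ y in 𝓝 x, fderiv ℝ f y u = φ y := by
    filter_upwards [hφ, hf.eventually (by simp)] with y hy hfy
    exact ((hfy.differentiableAt (by norm_num)).hasFDerivAt.comp_hasDerivAt_of_eq 0 (hline y)
      (by simp)).unique hy
  have hcont : Tendsto (fun t : ℝ => x + t • u) (𝓝 0) (𝓝 x) := by
    simpa using (hline x).continuousAt.tendsto
  have hH : HasFDerivAt (fderiv ℝ f) (fderiv ℝ (fderiv ℝ f) x) x :=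
    ((hf.fderiv_right (m := 1) (by norm_num)).differentiableAt one_ne_zero).hasFDerivAt
  have hsecond : HasDerivAt (fun t : ℝ => fderiv ℝ f (x + t • u) u)
      (fderiv ℝ (fderiv ℝ f) x u u) 0 := by
    simpa using (hH.comp_hasDerivAt_of_eq 0 (hline x) (by simp)).clm_apply (hasDerivAt_const 0 u)
  exact hsecond.unique (hD.congr_of_eventuallyEq (hcont.eventually hdir))

theorem HasDerivAt.comp_add_mul_zero {f : ℝ → ℝ} {f' a : ℝ} (b : ℝ) (hf : HasDerivAt f f' a) :
    HasDerivAt (fun s : ℝ => f (a + s * b)) (f' * b) 0 := by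
  have hline : HasDerivAt (fun s : ℝ => a + s * b) b 0 := by
    simpa using ((hasDerivAt_id (0 : ℝ)).mul_const b).const_add a
  exact hf.comp_of_eq 0 hline (by simp)

theorem abs_rpow_sub_two_mul_sq (p : ℝ) {y : ℝ} (hy : y ≠ 0) :
    |y| ^ (p - 2) * y ^ 2 = |y| ^ p := by
  rw [← sq_abs, ← Real.rpow_natCast, ← Real.rpow_add (abs_pos.2 hy)]
  norm_num

theorem hasDerivAt_abs_rpow_of_ne_zero (q : ℝ) {y : ℝ} (hy : y ≠ 0) :
    HasDerivAt (fun y : ℝ => |y| ^ q) (q * |y| ^ (q - 2) * y) y := by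
  refine ((hasDerivAt_abs hy).rpow_const (p := q) (Or.inl (abs_ne_zero.2 hy))).congr_deriv ?_
  rw [show q - 1 = q - 2 + 1 by ring, Real.rpow_add_one (abs_ne_zero.2 hy)]
  linear_combination (q * |y| ^ (q - 2)) * sign_mul_abs y

theorem hasDerivAt_abs_rpow_sub_two_mul_self (p : ℝ) {y : ℝ} (hy : y ≠ 0) :
    HasDerivAt (fun y : ℝ => |y| ^ (p - 2) * y) ((p - 1) * |y| ^ (p - 2)) y := by
  refine ((hasDerivAt_abs_rpow_of_ne_zero (p - 2) hy).mul (hasDerivAt_id' y)).congr_deriv ?_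
  have := abs_rpow_sub_two_mul_sq (p - 2) hy
  linear_combination (p - 2) * this

theorem mul_sum_mul_sq_sub_sq_eq {ι : Type*} (s : Finset ι) (w a b : ι → ℝ)
    (hS : ∑ i ∈ s, w i * a i ^ 2 ≠ 0) :
    (∑ i ∈ s, w i * a i ^ 2) * (∑ i ∈ s, w i * b i ^ 2) - (∑ i ∈ s, w i * a i * b i) ^ 2 =
      (∑ i ∈ s, w i * a i ^ 2) *
        ∑ i ∈ s, w i * (b i - (∑ j ∈ s, w j * a j * b j) / (∑ j ∈ s, w j * a j ^ 2) * a i) ^ 2 := by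
  set T := (∑ j ∈ s, w j * a j * b j) / (∑ j ∈ s, w j * a j ^ 2)
  have hexpand : ∑ i ∈ s, w i * (b i - T * a i) ^ 2 =
      ∑ i ∈ s, w i * b i ^ 2 - 2 * T * ∑ i ∈ s, w i * a i * b i +
        T ^ 2 * ∑ i ∈ s, w i * a i ^ 2 := by
    simp only [Finset.mul_sum, ← Finset.sum_sub_distrib, ← Finset.sum_add_distrib]
    exact Finset.sum_congr rfl fun i _ => by ring
  rw [hexpand]
  simp only [T]
  field_simp
  ring

theorem norm_sq_sub_inner_sq_div_le_norm_sub_smul_sq {E : Type*} [NormedAddCommGroup E]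
    [InnerProductSpace ℝ E] (x u : E) (T : ℝ) :
    ‖u‖ ^ 2 - inner ℝ x u ^ 2 / ‖x‖ ^ 2 ≤ ‖u - T • x‖ ^ 2 := by
  rcases eq_or_ne x 0 with rfl | hx
  · simp
  rw [norm_sub_sq_real, inner_smul_right, norm_smul, Real.norm_eq_abs, mul_pow, sq_abs,
    real_inner_comm x u]
  have hcomplete : (T * ‖x‖ - inner ℝ x u / ‖x‖) ^ 2 =
      T ^ 2 * ‖x‖ ^ 2 - 2 * T * inner ℝ x u + inner ℝ x u ^ 2 / ‖x‖ ^ 2 := by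
    field_simp
    ring
  linarith [sq_nonneg (T * ‖x‖ - inner ℝ x u / ‖x‖)]

section SumAbsRpow

variable {ι : Type*} [Fintype ι]

theorem hasDerivAt_sum_abs_rpow_add_mul (p : ℝ) {y : ι → ℝ} (hy : ∀ i, y i ≠ 0) (u : ι → ℝ) :
    HasDerivAt (fun s : ℝ => ∑ i, |y i + s * u i| ^ p)
      (p * ∑ i, |y i| ^ (p - 2) * y i * u i) 0 := by
  rw [Finset.mul_sum]
  exact HasDerivAt.fun_sum fun i _ => by
    simpa [mul_assoc] using ((hasDerivAt_abs_rpow_of_ne_zero p (hy i)).comp_add_mul_zero (u i))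

theorem hasDerivAt_sum_abs_rpow_sub_two_mul_add_mul (p : ℝ) {y : ι → ℝ} (hy : ∀ i, y i ≠ 0)
    (u : ι → ℝ) :
    HasDerivAt (fun s : ℝ => ∑ i, |y i + s * u i| ^ (p - 2) * (y i + s * u i) * u i)
      ((p - 1) * ∑ i, |y i| ^ (p - 2) * u i ^ 2) 0 := by
  rw [Finset.mul_sum]
  refine HasDerivAt.fun_sum fun i _ => ?_
  refine (((hasDerivAt_abs_rpow_sub_two_mul_self p (hy i)).comp_add_mul_zero (u i)).mul_const
    (u i)).congr_deriv ?_
  ring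

theorem norm_rpow_le_abs_apply_rpow {q : ℝ} (hq : q ≤ 0) {x : EuclideanSpace ℝ ι} {i : ι}
    (hxi : x i ≠ 0) : ‖x‖ ^ q ≤ |x i| ^ q :=
  Real.rpow_le_rpow_of_nonpos (abs_pos.2 hxi) (by simpa using PiLp.norm_apply_le x i) hq

theorem sum_abs_rpow_rpow_le {p : ℝ} (hp0 : 0 < p) (hp2 : p ≤ 2) (x : EuclideanSpace ℝ ι) :
    (∑ i, |x i| ^ p) ^ (2 / p) ≤ (Fintype.card ι : ℝ) ^ (2 / p - 1) * ‖x‖ ^ 2 := by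
  have h := Real.rpow_sum_le_const_mul_sum_rpow Finset.univ (fun i => |x i| ^ p)
    ((one_le_div hp0).2 hp2)
  have hpow : ∀ i, (|x i| ^ p) ^ (2 / p) = x i ^ 2 := fun i => by
    rw [← Real.rpow_mul (abs_nonneg _), mul_div_cancel₀ _ hp0.ne', Real.rpow_two, sq_abs]
  simp only [abs_of_nonneg (Real.rpow_nonneg (abs_nonneg _) _), hpow, Finset.card_univ] at h
  rwa [EuclideanSpace.real_norm_sq_eq]

variable [Nonempty ι]

theorem sum_abs_rpow_pos (p : ℝ) {y : ι → ℝ} (hy : ∀ i, y i ≠ 0) :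
    0 < ∑ i, |y i| ^ p :=
  Finset.sum_pos (fun i _ => Real.rpow_pos_of_pos (abs_pos.2 (hy i)) p) Finset.univ_nonempty

theorem contDiffAt_sum_abs_rpow_rpow {n : ℕ∞} (p : ℝ)
    {x : EuclideanSpace ℝ ι} (hx : ∀ i, x i ≠ 0) :
    ContDiffAt ℝ n (fun y : EuclideanSpace ℝ ι => (∑ i, |y i| ^ p) ^ (1 / p)) x := by
  have hsum : ContDiffAt ℝ n (fun y : EuclideanSpace ℝ ι => ∑ i, |y i| ^ p) x :=
    ContDiffAt.sum fun i _ => (Real.contDiffAt_rpow_const_of_ne (abs_ne_zero.2 (hx i))).comp x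
    ((contDiffAt_abs (hx i)).comp x (EuclideanSpace.proj (𝕜 := ℝ) i).contDiff.contDiffAt)
  exact (Real.contDiffAt_rpow_const_of_ne (sum_abs_rpow_pos p hx).ne').comp x hsum

theorem hasDerivAt_sum_abs_rpow_rpow_add_smul {p : ℝ} (hp : p ≠ 0) {y : EuclideanSpace ℝ ι}
    (hy : ∀ i, y i ≠ 0) (u : EuclideanSpace ℝ ι) :
    HasDerivAt (fun s : ℝ => (∑ i, |(y + s • u) i| ^ p) ^ (1 / p))
      ((∑ i, |y i| ^ p) ^ (1 / p - 1) * ∑ i, |y i| ^ (p - 2) * y i * u i) 0 := by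
  have hS := (hasDerivAt_sum_abs_rpow_add_mul p hy u).rpow_const (p := 1 / p)
    (Or.inl (by simpa using (sum_abs_rpow_pos p hy).ne'))
  simp only [PiLp.add_apply, PiLp.smul_apply, smul_eq_mul]
  refine hS.congr_deriv ?_
  simp only [zero_mul, add_zero]
  field_simp

theorem fderiv_fderiv_sum_abs_rpow_rpow_apply {p : ℝ} (hp : p ≠ 0) {x : EuclideanSpace ℝ ι}
    (hx : ∀ i, x i ≠ 0) (u : EuclideanSpace ℝ ι) :
    fderiv ℝ (fderiv ℝ (fun y : EuclideanSpace ℝ ι => (∑ i, |y i| ^ p) ^ (1 / p))) x u u =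
      (p - 1) * (∑ i, |x i| ^ p) ^ (1 / p - 2) *
        ((∑ i, |x i| ^ p) * (∑ i, |x i| ^ (p - 2) * u i ^ 2) -
          (∑ i, |x i| ^ (p - 2) * x i * u i) ^ 2) := by
  set S := ∑ i, |x i| ^ p with hS_def
  have hS : 0 < S := sum_abs_rpow_pos p hx
  have hnear : ∀ᶠ y in 𝓝 x, ∀ i, y i ≠ 0 := eventually_all.2 fun i =>
    (EuclideanSpace.proj (𝕜 := ℝ) i).continuous.continuousAt.eventually_ne (hx i)
  refine fderiv_fderiv_apply_apply_of_hasDerivAt (contDiffAt_sum_abs_rpow_rpow (n := 2) p hx)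
    (hnear.mono fun y hy => hasDerivAt_sum_abs_rpow_rpow_add_smul hp hy u) ?_
  have hpow := (hasDerivAt_sum_abs_rpow_add_mul p hx u).rpow_const (p := 1 / p - 1)
    (Or.inl (by simpa using hS.ne'))
  have hprod := hpow.mul (hasDerivAt_sum_abs_rpow_sub_two_mul_add_mul p hx u)
  simp only [PiLp.add_apply, PiLp.smul_apply, smul_eq_mul]
  refine hprod.congr_deriv ?_
  simp only [zero_mul, add_zero, ← hS_def]
  rw [show 1 / p - 1 - 1 = 1 / p - 2 by ring, show 1 / p - 1 = 1 / p - 2 + 1 by ring,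
    Real.rpow_add_one hS.ne']
  field_simp
  ring

theorem norm_rpow_mul_norm_sq_sub_inner_sq_le {p : ℝ} (hp2 : p ≤ 2) {x : EuclideanSpace ℝ ι}
    (hx : ∀ i, x i ≠ 0) (u : EuclideanSpace ℝ ι) :
    ‖x‖ ^ (p - 2) * (‖u‖ ^ 2 - inner ℝ x u ^ 2 / ‖x‖ ^ 2) ≤
      ((∑ i, |x i| ^ p) * (∑ i, |x i| ^ (p - 2) * u i ^ 2) -
        (∑ i, |x i| ^ (p - 2) * x i * u i) ^ 2) / ∑ i, |x i| ^ p := by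
  have hS_eq : ∑ i, |x i| ^ p = ∑ i, |x i| ^ (p - 2) * x i ^ 2 :=
    Finset.sum_congr rfl fun i _ => (abs_rpow_sub_two_mul_sq p (hx i)).symm
  have hS := sum_abs_rpow_pos p hx
  rw [le_div_iff₀ hS, hS_eq, mul_sum_mul_sq_sub_sq_eq _ _ _ _ (hS_eq ▸ hS.ne'),
    mul_comm _ (∑ i, _)]
  refine mul_le_mul_of_nonneg_left ?_ (hS_eq ▸ hS.le)
  set T := (∑ j, |x j| ^ (p - 2) * x j * u j) / ∑ j, |x j| ^ (p - 2) * x j ^ 2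
  calc ‖x‖ ^ (p - 2) * (‖u‖ ^ 2 - inner ℝ x u ^ 2 / ‖x‖ ^ 2)
      ≤ ‖x‖ ^ (p - 2) * ‖u - T • x‖ ^ 2 :=
        mul_le_mul_of_nonneg_left (norm_sq_sub_inner_sq_div_le_norm_sub_smul_sq x u T)
          (Real.rpow_nonneg (norm_nonneg x) _)
    _ = ∑ i, ‖x‖ ^ (p - 2) * (u i - T * x i) ^ 2 := by
        simp [EuclideanSpace.real_norm_sq_eq, Finset.mul_sum]
    _ ≤ ∑ i, |x i| ^ (p - 2) * (u i - T * x i) ^ 2 :=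
        Finset.sum_le_sum fun i _ => mul_le_mul_of_nonneg_right
          (norm_rpow_le_abs_apply_rpow (by linarith) (hx i)) (sq_nonneg _)

theorem card_rpow_mul_norm_rpow_le_sum_abs_rpow_rpow {p : ℝ} (hp1 : 1 ≤ p) (hp2 : p ≤ 2)
    {x : EuclideanSpace ℝ ι} (hx : ∀ i, x i ≠ 0) :
    (Fintype.card ι : ℝ) ^ (-(3 * (2 - p)) / (2 * p)) * ‖x‖ ^ (1 - p) ≤
      (∑ i, |x i| ^ p) ^ (1 / p - 1) := by
  have hp0 : 0 < p := by linarith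
  have hS := sum_abs_rpow_pos p hx
  have h := Real.rpow_le_rpow_of_nonpos (Real.rpow_pos_of_pos hS _)
    (sum_abs_rpow_rpow_le hp0 hp2 x) (by linarith : (1 - p) / 2 ≤ 0)
  rw [← Real.rpow_mul hS.le, Real.mul_rpow (by positivity) (by positivity),
    ← Real.rpow_mul (Nat.cast_nonneg _), ← Real.rpow_two, ← Real.rpow_mul (norm_nonneg _),
    show 2 / p * ((1 - p) / 2) = 1 / p - 1 by field_simp,
    show 2 * ((1 - p) / 2) = 1 - p by ring] at h
  refine le_trans (mul_le_mul_of_nonneg_right ?_ (by positivity)) h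
  refine Real.rpow_le_rpow_of_exponent_le (by exact_mod_cast Fintype.card_pos) ?_
  rw [show (2 / p - 1) * ((1 - p) / 2) = (2 - p) * (1 - p) / (2 * p) by field_simp,
    div_le_div_iff_of_pos_right (by positivity)]
  nlinarith

theorem le_fderiv_fderiv_sum_abs_rpow_rpow_apply {p : ℝ} (hp1 : 1 < p) (hp2 : p ≤ 2)
    {x : EuclideanSpace ℝ ι} (hx : ∀ i, x i ≠ 0) (u : EuclideanSpace ℝ ι) :
    (p - 1) * (Fintype.card ι : ℝ) ^ (-(3 * (2 - p)) / (2 * p)) * ‖x‖⁻¹ *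
        (‖u‖ ^ 2 - inner ℝ x u ^ 2 / ‖x‖ ^ 2) ≤
      fderiv ℝ (fderiv ℝ (fun y : EuclideanSpace ℝ ι => (∑ i, |y i| ^ p) ^ (1 / p))) x u u := by
  have hp0 : 0 < p := by linarith
  rw [fderiv_fderiv_sum_abs_rpow_rpow_apply hp0.ne' hx u]
  set S := ∑ i, |x i| ^ p
  have hS : 0 < S := sum_abs_rpow_pos p hx
  have hN : 0 < ‖x‖ := norm_pos_iff.2 fun h => hx (Classical.arbitrary ι) (by simp [h])
  have hQ : 0 ≤ ‖u‖ ^ 2 - inner ℝ x u ^ 2 / ‖x‖ ^ 2 := by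
    rw [sub_nonneg, div_le_iff₀ (by positivity), ← mul_pow, mul_comm, ← sq_abs]
    exact pow_le_pow_left₀ (abs_nonneg _) (abs_real_inner_le_norm x u) 2
  have hNinv : ‖x‖⁻¹ = ‖x‖ ^ (1 - p) * ‖x‖ ^ (p - 2) := by
    rw [← Real.rpow_add hN, show 1 - p + (p - 2) = -1 by ring, Real.rpow_neg_one]
  calc (p - 1) * (Fintype.card ι : ℝ) ^ (-(3 * (2 - p)) / (2 * p)) * ‖x‖⁻¹ *
        (‖u‖ ^ 2 - inner ℝ x u ^ 2 / ‖x‖ ^ 2)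
      = (p - 1) * ((Fintype.card ι : ℝ) ^ (-(3 * (2 - p)) / (2 * p)) * ‖x‖ ^ (1 - p)) *
          (‖x‖ ^ (p - 2) * (‖u‖ ^ 2 - inner ℝ x u ^ 2 / ‖x‖ ^ 2)) := by
        rw [hNinv]
        ring
    _ ≤ (p - 1) * S ^ (1 / p - 1) * ((S * (∑ i, |x i| ^ (p - 2) * u i ^ 2) -
          (∑ i, |x i| ^ (p - 2) * x i * u i) ^ 2) / S) := by
        have := sub_nonneg.2 hp1.le
        gcongr (p - 1) * ?_ * ?_
        · exact card_rpow_mul_norm_rpow_le_sum_abs_rpow_rpow hp1.le hp2 hx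
        · exact norm_rpow_mul_norm_sq_sub_inner_sq_le hp2 hx u
    _ = _ := by
        rw [show 1 / p - 1 = 1 / p - 2 + 1 by ring, Real.rpow_add_one hS.ne']
        field_simp

end SumAbsRpow

/-- For `1 < p ≤ 2` and `x ∈ ℝ^d` with all coordinates nonzero, the function
`F(y) = ‖y‖_p` is twice differentiable at `x` (its gradient map `fderiv ℝ F` has a
derivative `H` at `x`), and the Hessian satisfies
`H ⪰ (p − 1) d^{−3(2−p)/(2p)} ‖x‖₂^{−1} (I − x xᵀ/‖x‖₂²)` as a quadratic form. -/
theorem stmt_12 (d : ℕ) (hd : 1 ≤ d) (p : ℝ) (hp1 : 1 < p) (hp2 : p ≤ 2)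
    (x : EuclideanSpace ℝ (Fin d)) (hx : ∀ i, x i ≠ 0) :
    ∃ H : EuclideanSpace ℝ (Fin d) →L[ℝ] EuclideanSpace ℝ (Fin d) →L[ℝ] ℝ,
      HasFDerivAt
        (fderiv ℝ (fun y : EuclideanSpace ℝ (Fin d) => (∑ i, |y i| ^ p) ^ (1 / p)))
        H x ∧
      ∀ u : EuclideanSpace ℝ (Fin d),
        (p - 1) * (d : ℝ) ^ (-(3 * (2 - p)) / (2 * p)) * ‖x‖⁻¹ *
            (‖u‖ ^ 2 - (inner ℝ x u : ℝ) ^ 2 / ‖x‖ ^ 2) ≤ H u u := by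
  have : NeZero d := ⟨by omega⟩
  have hF := contDiffAt_sum_abs_rpow_rpow (n := 2) p hx
  refine ⟨_, ((hF.fderiv_right (m := 1) le_rfl).differentiableAt one_ne_zero).hasFDerivAt,
    fun u => ?_⟩
  simpa using le_fderiv_fderiv_sum_abs_rpow_rpow_apply hp1 hp2 hx u
end

section
/- Let d ≥ 1, let 1 < p ≤ 2, and let x ∈ ℝ^d have all coordinates nonzero. Define the diagonal matrix Λ_(p) = diag((|x_1|/‖x‖_p)^{p−2}, …, (|x_d|/‖x‖_p)^{p−2}) and the vector x_(p) = ‖x‖_p^{1−p}·(|x_1|^{p−1}·sgn(x_1), …, |x_d|^{p−1}·sgn(x_d))ᵀ. Then, in the positive semidefinite order, Λ_(p) − x_(p)·x_(p)ᵀ ⪰ d^{−(2−p)/p}·(I_d − x·xᵀ/‖x‖₂²); in particular Λ_(p) − x_(p)·x_(p)ᵀ is positive semidefinite. -/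
open Matrix

/-- The `ℓ_p` norm of a vector in `ℝ^d`. -/
noncomputable def lpNorm (d : ℕ) (p : ℝ) (x : Fin d → ℝ) : ℝ :=
  (∑ i, |x i| ^ p) ^ (1 / p)

/-- The vector `x_(p) = ‖x‖_p^{1−p}·(|x_i|^{p−1}·sgn(x_i))_i`. -/
noncomputable def xP (d : ℕ) (p : ℝ) (x : Fin d → ℝ) : Fin d → ℝ :=
  fun i => lpNorm d p x ^ (1 - p) * (|x i| ^ (p - 1) * Real.sign (x i))

/-- The diagonal matrix `Λ_(p) = diag((|x_i|/‖x‖_p)^{p−2})_i`. -/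
noncomputable def lamP (d : ℕ) (p : ℝ) (x : Fin d → ℝ) : Matrix (Fin d) (Fin d) ℝ :=
  Matrix.diagonal fun i => (|x i| / lpNorm d p x) ^ (p - 2)

/-!
Write `N = ‖x‖_p`, `u = x_(p)` and `Λ_(p) = diag(λ)`. Then `λ_i ≥ 1` because `|x_i| ≤ N` and
`p - 2 ≤ 0`, and `Λ_(p) x = N u`, `⟨u, x⟩ = N`. For any `y`, with `t = ⟨u, y⟩ / N`, these two
identities give
`yᵀ(Λ_(p) − u uᵀ)y = Σ λ_i (y_i − t x_i)² ≥ Σ (y_i − t x_i)² ≥ yᵀ(I − x xᵀ/‖x‖₂²)y`,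
the last step because the orthogonal projection of `y` onto `x^⊥` is its shortest residual
along `x`. So `Λ_(p) − u uᵀ` dominates the projection `I − x xᵀ/‖x‖₂²`, which is positive
semidefinite and dominates any multiple `c ≤ 1` of itself, e.g. `c = d^{−(2−p)/p}`.
-/

namespace Real

lemma sign_mul_abs (r : ℝ) : sign r * |r| = r := by
  rcases lt_trichotomy r 0 with h | rfl | h
  · rw [sign_of_neg h, abs_of_neg h]; ring
  · simp
  · rw [sign_of_pos h, abs_of_pos h]; ring

lemma sign_mul_self (r : ℝ) : sign r * r = |r| := by
  rcases lt_trichotomy r 0 with h | rfl | h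
  · rw [sign_of_neg h, abs_of_neg h]; ring
  · simp
  · rw [sign_of_pos h, abs_of_pos h]; ring

end Real

section Projection

variable {ι : Type*} [Fintype ι]

lemma dotProduct_vecMulVec_self_mulVec (a y : ι → ℝ) :
    y ⬝ᵥ (vecMulVec a a *ᵥ y) = (a ⬝ᵥ y) ^ 2 := by
  rw [vecMulVec_mulVec, op_smul_eq_smul, dotProduct_smul, smul_eq_mul, dotProduct_comm, sq]

lemma isHermitian_vecMulVec_self (a : ι → ℝ) : (vecMulVec a a).IsHermitian := by
  simpa using (posSemidef_vecMulVec_self_star a).isHermitian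

variable [DecidableEq ι]

lemma dotProduct_diagonal_mulVec (f y : ι → ℝ) :
    y ⬝ᵥ (diagonal f *ᵥ y) = ∑ i, f i * y i ^ 2 := by
  simp only [dotProduct, mulVec_diagonal]
  exact Finset.sum_congr rfl fun i _ => by ring

/-- The orthogonal projection onto `v^⊥` (the identity when `v = 0`). -/
noncomputable def projPerp (v : ι → ℝ) : Matrix ι ι ℝ :=
  1 - (∑ i, v i ^ 2)⁻¹ • vecMulVec v v

lemma isHermitian_projPerp (v : ι → ℝ) : (projPerp v).IsHermitian :=
  isHermitian_one.sub ((isHermitian_vecMulVec_self v).smul (IsSelfAdjoint.all _))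

lemma dotProduct_projPerp_mulVec (v y : ι → ℝ) :
    y ⬝ᵥ (projPerp v *ᵥ y) = y ⬝ᵥ y - (v ⬝ᵥ y) ^ 2 / (v ⬝ᵥ v) := by
  have hv : ∑ i, v i ^ 2 = v ⬝ᵥ v := by simp [dotProduct, sq]
  rw [projPerp, sub_mulVec, dotProduct_sub, one_mulVec, smul_mulVec, dotProduct_smul,
    dotProduct_vecMulVec_self_mulVec, smul_eq_mul, hv, div_eq_inv_mul]

lemma posSemidef_projPerp (v : ι → ℝ) : (projPerp v).PosSemidef := by
  refine .of_dotProduct_mulVec_nonneg (isHermitian_projPerp v) fun y => ?_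
  rw [star_trivial, dotProduct_projPerp_mulVec, sub_nonneg]
  have cauchy_schwarz : (v ⬝ᵥ y) ^ 2 ≤ (y ⬝ᵥ y) * (v ⬝ᵥ v) := by
    rw [dotProduct_comm]
    simpa only [dotProduct, sq] using Finset.sum_mul_sq_le_sq_mul_sq Finset.univ y v
  exact div_le_of_le_mul₀ (dotProduct_self_star_nonneg v) (dotProduct_self_star_nonneg y)
    cauchy_schwarz

lemma dotProduct_projPerp_mulVec_le (v y : ι → ℝ) (s : ℝ) :
    y ⬝ᵥ (projPerp v *ᵥ y) ≤ ∑ i, (y i - s * v i) ^ 2 := by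
  rw [dotProduct_projPerp_mulVec]
  have expand : ∑ i, (y i - s * v i) ^ 2 = y ⬝ᵥ y - 2 * s * (v ⬝ᵥ y) + s ^ 2 * (v ⬝ᵥ v) := by
    simp only [dotProduct, Finset.mul_sum, ← Finset.sum_sub_distrib, ← Finset.sum_add_distrib]
    exact Finset.sum_congr rfl fun i _ => by ring
  rcases eq_or_ne v 0 with rfl | hv
  · simp [dotProduct, sq]
  have hvv : 0 < v ⬝ᵥ v := lt_of_le_of_ne (dotProduct_self_star_nonneg v)
    (Ne.symm (dotProduct_self_eq_zero.not.mpr hv))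
  have completed_square : ∑ i, (y i - s * v i) ^ 2 - (y ⬝ᵥ y - (v ⬝ᵥ y) ^ 2 / (v ⬝ᵥ v))
      = (s * (v ⬝ᵥ v) - v ⬝ᵥ y) ^ 2 / (v ⬝ᵥ v) := by
    rw [expand]; field_simp; ring
  linarith [div_nonneg (sq_nonneg (s * (v ⬝ᵥ v) - v ⬝ᵥ y)) hvv.le]

theorem posSemidef_diagonal_sub_vecMulVec_sub_projPerp {lam u v : ι → ℝ} {N : ℝ} (hN : N ≠ 0)
    (one_le_lam : ∀ i, 1 ≤ lam i) (lam_mul : ∀ i, lam i * v i = N * u i) (huv : u ⬝ᵥ v = N) :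
    (diagonal lam - vecMulVec u u - projPerp v).PosSemidef := by
  refine .of_dotProduct_mulVec_nonneg (((isHermitian_diagonal lam).sub
    (isHermitian_vecMulVec_self u)).sub (isHermitian_projPerp v)) fun y => ?_
  rw [star_trivial, sub_mulVec, sub_mulVec, dotProduct_sub, dotProduct_sub,
    dotProduct_diagonal_mulVec, dotProduct_vecMulVec_self_mulVec, sub_nonneg]
  set t := u ⬝ᵥ y / N
  have residual : ∑ i, lam i * y i ^ 2 - (u ⬝ᵥ y) ^ 2 = ∑ i, lam i * (y i - t * v i) ^ 2 := by
    have h1 : ∑ i, lam i * (v i * y i) = N * (u ⬝ᵥ y) := by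
      simp only [dotProduct, Finset.mul_sum, ← mul_assoc, lam_mul]
    have h2 : ∑ i, lam i * v i ^ 2 = N * (u ⬝ᵥ v) := by
      simp only [dotProduct, Finset.mul_sum, sq, ← mul_assoc, lam_mul]
    have expand : ∑ i, lam i * (y i - t * v i) ^ 2 = ∑ i, lam i * y i ^ 2
        - 2 * t * ∑ i, lam i * (v i * y i) + t ^ 2 * ∑ i, lam i * v i ^ 2 := by
      simp only [Finset.mul_sum, ← Finset.sum_sub_distrib, ← Finset.sum_add_distrib]
      exact Finset.sum_congr rfl fun i _ => by ring
    rw [expand, h1, h2, huv]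
    simp only [t]
    field_simp
    ring
  calc y ⬝ᵥ (projPerp v *ᵥ y) ≤ ∑ i, (y i - t * v i) ^ 2 := dotProduct_projPerp_mulVec_le v y t
    _ ≤ ∑ i, lam i * (y i - t * v i) ^ 2 := Finset.sum_le_sum fun i _ =>
        le_mul_of_one_le_left (sq_nonneg _) (one_le_lam i)
    _ = _ := residual.symm

end Projection

section LpNorm

variable {d : ℕ} {p : ℝ}

lemma lpNorm_rpow (hp : p ≠ 0) (x : Fin d → ℝ) : lpNorm d p x ^ p = ∑ i, |x i| ^ p := by
  rw [lpNorm, ← Real.rpow_mul (Finset.sum_nonneg fun i _ => by positivity), one_div,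
    inv_mul_cancel₀ hp, Real.rpow_one]

lemma abs_le_lpNorm (hp : 0 < p) (x : Fin d → ℝ) (i : Fin d) : |x i| ≤ lpNorm d p x := by
  have h : |x i| ^ p ≤ lpNorm d p x ^ p := by
    rw [lpNorm_rpow hp.ne']
    exact Finset.single_le_sum (f := fun j => |x j| ^ p) (fun j _ => by positivity)
      (Finset.mem_univ i)
  exact (Real.rpow_le_rpow_iff (abs_nonneg _) (by unfold lpNorm; positivity) hp).mp h

lemma one_le_lamP_diag (hp : 0 < p) (hp2 : p ≤ 2) {x : Fin d → ℝ} {i : Fin d} (hx : x i ≠ 0) :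
    1 ≤ (|x i| / lpNorm d p x) ^ (p - 2) := by
  have hN : 0 < lpNorm d p x := (abs_pos.mpr hx).trans_le (abs_le_lpNorm hp x i)
  exact Real.one_le_rpow_of_pos_of_le_one_of_nonpos (div_pos (abs_pos.mpr hx) hN)
    (div_le_one_of_le₀ (abs_le_lpNorm hp x i) hN.le) (by linarith)

lemma lamP_diag_mul (hp : p ≠ 1) {x : Fin d → ℝ} (hN : 0 < lpNorm d p x) (i : Fin d) :
    (|x i| / lpNorm d p x) ^ (p - 2) * x i = lpNorm d p x * xP d p x i := by
  set N := lpNorm d p x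
  have habs : |x i| ^ (p - 2) * |x i| = |x i| ^ (p - 1) := by
    rw [← Real.rpow_add_one' (abs_nonneg _) (by contrapose! hp; linarith)]; ring_nf
  have hNpow : N * N ^ (1 - p) * N ^ (p - 2) = 1 := by
    rw [mul_assoc, ← Real.rpow_add hN, show 1 - p + (p - 2) = -1 by ring, Real.rpow_neg_one,
      mul_inv_cancel₀ hN.ne']
  calc (|x i| / N) ^ (p - 2) * x i
      = N * N ^ (1 - p) * N ^ (p - 2) * ((|x i| ^ (p - 2) * |x i|) * Real.sign (x i))
          / N ^ (p - 2) := by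
        rw [Real.div_rpow (abs_nonneg _) hN.le, hNpow, mul_assoc, mul_comm |x i|,
          Real.sign_mul_abs]
        ring
    _ = N * (N ^ (1 - p) * (|x i| ^ (p - 1) * Real.sign (x i))) := by
        rw [habs]; field_simp

lemma xP_dotProduct_self (hp : 0 < p) {x : Fin d → ℝ} (hN : 0 < lpNorm d p x) :
    xP d p x ⬝ᵥ x = lpNorm d p x := by
  have hterm : ∀ i, xP d p x i * x i = lpNorm d p x ^ (1 - p) * |x i| ^ p := fun i => by
    rw [xP, mul_assoc, mul_assoc, Real.sign_mul_self,
      ← Real.rpow_add_one' (abs_nonneg _) (by linarith), sub_add_cancel]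
  rw [dotProduct, Finset.sum_congr rfl fun i _ => hterm i, ← Finset.mul_sum,
    ← lpNorm_rpow hp.ne', ← Real.rpow_add hN, sub_add_cancel, Real.rpow_one]

end LpNorm

/-- For `1 < p ≤ 2` and `x ∈ ℝ^d` with all coordinates nonzero,
`Λ_(p) − x_(p) x_(p)ᵀ ⪰ d^{−(2−p)/p}·(I − x xᵀ/‖x‖₂²)`; in particular
`Λ_(p) − x_(p) x_(p)ᵀ` is positive semidefinite. -/
theorem stmt_13 (d : ℕ) (hd : 1 ≤ d) (p : ℝ) (hp1 : 1 < p) (hp2 : p ≤ 2)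
    (x : Fin d → ℝ) (hx : ∀ i, x i ≠ 0) :
    Matrix.PosSemidef
      (lamP d p x - Matrix.vecMulVec (xP d p x) (xP d p x) -
        ((d : ℝ) ^ (-(2 - p) / p)) •
          ((1 : Matrix (Fin d) (Fin d) ℝ) - (∑ i, x i ^ 2)⁻¹ • Matrix.vecMulVec x x)) ∧
    Matrix.PosSemidef (lamP d p x - Matrix.vecMulVec (xP d p x) (xP d p x)) := by
  have hp : 0 < p := one_pos.trans hp1
  have hN : 0 < lpNorm d p x := (abs_pos.mpr (hx ⟨0, hd⟩)).trans_le (abs_le_lpNorm hp x _)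
  have hc : (d : ℝ) ^ (-(2 - p) / p) ≤ 1 :=
    Real.rpow_le_one_of_one_le_of_nonpos (by exact_mod_cast hd)
      (div_nonpos_of_nonpos_of_nonneg (by linarith) hp.le)
  have dominates : (lamP d p x - vecMulVec (xP d p x) (xP d p x) - projPerp x).PosSemidef :=
    posSemidef_diagonal_sub_vecMulVec_sub_projPerp hN.ne' (fun i => one_le_lamP_diag hp hp2 (hx i))
      (lamP_diag_mul hp1.ne' hN) (xP_dotProduct_self hp hN)
  have hP := posSemidef_projPerp x
  constructor
  · convert dominates.add (hP.smul (sub_nonneg.mpr hc)) using 1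
    rw [projPerp]; module
  · simpa using dominates.add hP
end

section
/- Let (x_n)_{n≥1} be a sequence of positive real numbers and let a, b, c > 0 with c ≤ 2. Suppose that for every n ≥ 1, x_n ≤ a·√(b·n + c·Σ_{k=1}^{n−1} x_k). Then, with h = max(a², b), we have x_n ≤ h·n for every n ≥ 1. -/
lemma gauss_icc (m : ℕ) : ∑ k ∈ Finset.Icc 1 m, (k : ℝ) = m * (m + 1) / 2 := by
  induction m with
  | zero => simp
  | succ n ih =>
    rw [Finset.sum_Icc_succ_top (by omega)]
    push_cast
    rw [ih]; ring

/-- If a positive sequence satisfies `x_n ≤ a·√(b·n + c·Σ_{k=1}^{n−1} x_k)` for all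
`n ≥ 1`, with `a, b, c > 0` and `c ≤ 2`, then `x_n ≤ max(a², b)·n` for all `n ≥ 1`. -/
theorem stmt_15 (x : ℕ → ℝ) (a b c : ℝ) (ha : 0 < a) (hb : 0 < b) (hc : 0 < c)
    (hc2 : c ≤ 2) (hpos : ∀ n, 1 ≤ n → 0 < x n)
    (hrec : ∀ n, 1 ≤ n →
      x n ≤ a * Real.sqrt (b * n + c * ∑ k ∈ Finset.Icc 1 (n - 1), x k)) :
    ∀ n, 1 ≤ n → x n ≤ max (a ^ 2) b * n := by
  set h : ℝ := max (a ^ 2) b with hh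
  have hh0 : 0 < h := lt_of_lt_of_le hb (le_max_right _ _)
  have ha2 : a ^ 2 ≤ h := le_max_left _ _
  have hbh : b ≤ h := le_max_right _ _
  have hasq : a ≤ Real.sqrt h := by
    rw [show a = Real.sqrt (a ^ 2) by rw [Real.sqrt_sq ha.le]]
    exact Real.sqrt_le_sqrt ha2
  intro n
  induction n using Nat.strong_induction_on with
  | _ n ih =>
    intro hn
    obtain ⟨m, rfl⟩ : ∃ m, n = m + 1 := ⟨n - 1, by omega⟩
    have hsub : m + 1 - 1 = m := rfl
    -- sum bound
    have hS : ∑ k ∈ Finset.Icc 1 m, x k ≤ h * (m * (m + 1) / 2) := by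
      calc ∑ k ∈ Finset.Icc 1 m, x k ≤ ∑ k ∈ Finset.Icc 1 m, h * (k : ℝ) := by
            apply Finset.sum_le_sum
            intro k hk
            rw [Finset.mem_Icc] at hk
            exact ih k (by omega) hk.1
        _ = h * (m * (m + 1) / 2) := by rw [← Finset.mul_sum, gauss_icc]
    have hS0 : 0 ≤ ∑ k ∈ Finset.Icc 1 m, x k := by
      apply Finset.sum_nonneg
      intro k hk
      rw [Finset.mem_Icc] at hk
      exact (hpos k hk.1).le
    have hcS : c * ∑ k ∈ Finset.Icc 1 m, x k ≤ h * m * (m + 1) := by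
      calc c * ∑ k ∈ Finset.Icc 1 m, x k ≤ 2 * (h * (m * (m + 1) / 2)) := by
            apply mul_le_mul hc2 hS hS0 (by norm_num)
        _ = h * m * (m + 1) := by ring
    have hin : b * ((m + 1 : ℕ) : ℝ) + c * ∑ k ∈ Finset.Icc 1 m, x k
        ≤ h * ((m : ℝ) + 1) ^ 2 := by
      push_cast
      have : b * ((m : ℝ) + 1) ≤ h * ((m : ℝ) + 1) := by
        apply mul_le_mul_of_nonneg_right hbh (by positivity)
      nlinarith
    have hkey := hrec (m + 1) (by omega)
    rw [hsub] at hkey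
    have hm0 : (0:ℝ) ≤ (m : ℝ) + 1 := by positivity
    calc x (m + 1) ≤ a * Real.sqrt (b * ((m + 1 : ℕ) : ℝ) + c * ∑ k ∈ Finset.Icc 1 m, x k) := hkey
      _ ≤ a * Real.sqrt (h * ((m : ℝ) + 1) ^ 2) := by
          apply mul_le_mul_of_nonneg_left (Real.sqrt_le_sqrt hin) ha.le
      _ = a * (Real.sqrt h * ((m : ℝ) + 1)) := by
          rw [Real.sqrt_mul hh0.le, Real.sqrt_sq hm0]
      _ ≤ Real.sqrt h * (Real.sqrt h * ((m : ℝ) + 1)) := by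
          apply mul_le_mul_of_nonneg_right hasq (by positivity)
      _ = h * ((m : ℝ) + 1) := by
          rw [← mul_assoc, Real.mul_self_sqrt hh0.le]
      _ = h * ((m + 1 : ℕ) : ℝ) := by push_cast; ring
end

section
/- Let (x_n)_{n≥1} be a sequence of positive real numbers, let a > 0 and 1 ≤ b ≤ 2, and suppose that x_{n+1} − x_n ≥ a·x_n^{(2−b)/2} for every n ≥ 1 and that x_1^{b/2} ≥ a. Then x_n ≥ (a·n)^{2/b}/8 for every n ≥ 1. -/
/-!
Put `y n = x n ^ (b / 2)` and `p = 2 / b ≤ 2`, so that `x n = y n ^ p` and the recurrence reads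
`y (n+1) ^ p ≥ y n ^ p + a * y n ^ (p - 1)`. As long as `y n ≥ a`, the elementary estimate
`(y + 2a/5) ^ p ≤ (y + 2a/5) ^ 2 / y ^ (2 - p) ≤ y ^ p + a * y ^ (p - 1)` shows that `y` gains at
least `2a/5` per step, so `y n ≥ 2an/5` and `x n ≥ (2/5) ^ p (an) ^ p ≥ (an) ^ p / 8`.
-/

open Real

lemma rpow_add_two_fifths_mul_le {y a p : ℝ} (ha : 0 < a) (hay : a ≤ y) (hp : p ≤ 2) :
    (y + 2 / 5 * a) ^ p ≤ y ^ p + a * y ^ (p - 1) := by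
  have hy : 0 < y := ha.trans_le hay
  set t := 2 / 5 * a / y with ht
  have ht0 : 0 ≤ t := by positivity
  have ht_le : t ≤ 2 / 5 := by rw [ht, div_le_iff₀ hy]; linarith
  have hsq : (1 + t) ^ (2 : ℝ) ≤ 1 + a / y := by
    have : a / y = 5 / 2 * t := by rw [ht]; ring
    rw [rpow_two, this]
    nlinarith
  calc (y + 2 / 5 * a) ^ p = y ^ p * (1 + t) ^ p := by
        rw [← mul_rpow hy.le (by positivity), ht, mul_add, mul_div_cancel₀ _ hy.ne', mul_one]
    _ ≤ y ^ p * (1 + a / y) := by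
        gcongr
        exact (rpow_le_rpow_of_exponent_le (by linarith) hp).trans hsq
    _ = y ^ p + a * y ^ (p - 1) := by
        rw [rpow_sub_one hy.ne']
        ring

lemma add_mul_le_of_add_le_succ {y : ℕ → ℝ} {a d : ℝ} (hd : 0 ≤ d) (h0 : a ≤ y 0)
    (hstep : ∀ n, a ≤ y n → y n + d ≤ y (n + 1)) (n : ℕ) : a + n * d ≤ y n := by
  induction n with
  | zero => simpa using h0
  | succ n ih =>
    have := hstep n (by linarith [mul_nonneg n.cast_nonneg hd])
    push_cast
    linarith

lemma rpow_half_add_le_of_sub_ge {u v a b : ℝ} (hu : 0 < u) (hv : 0 < v) (ha : 0 < a)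
    (hb : 1 ≤ b) (hau : a ≤ u ^ (b / 2)) (hrec : v - u ≥ a * u ^ ((2 - b) / 2)) :
    u ^ (b / 2) + 2 / 5 * a ≤ v ^ (b / 2) := by
  have hb0 : 0 < b := by linarith
  have hinv : (b / 2)⁻¹ = 2 / b := inv_div b 2
  have hpow : (u ^ (b / 2)) ^ (2 / b) = u := by
    rw [← hinv, rpow_rpow_inv hu.le (by positivity)]
  have hpow_sub : (u ^ (b / 2)) ^ (2 / b - 1) = u ^ ((2 - b) / 2) := by
    rw [← rpow_mul hu.le]
    congr 1
    field_simp
  have key := rpow_add_two_fifths_mul_le ha hau (p := 2 / b) (by rw [div_le_iff₀ hb0]; linarith)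
  rw [hpow, hpow_sub] at key
  have := (le_rpow_inv_iff_of_pos (z := 2 / b) (by positivity) hv.le (by positivity)).mpr
    (key.trans (by linarith))
  rwa [inv_div] at this

theorem stmt_16_general (x : ℕ → ℝ) (a b : ℝ) (ha : 0 < a) (hb1 : 1 ≤ b)
    (hpos : ∀ n, 1 ≤ n → 0 < x n)
    (hrec : ∀ n, 1 ≤ n → x (n + 1) - x n ≥ a * x n ^ ((2 - b) / 2))
    (hinit : x 1 ^ (b / 2) ≥ a) :
    ∀ n, 1 ≤ n → x n ≥ (a * n) ^ (2 / b) / 8 := by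
  have hb0 : 0 < b := by linarith
  have hgrowth (n : ℕ) : a + n * (2 / 5 * a) ≤ x (n + 1) ^ (b / 2) :=
    add_mul_le_of_add_le_succ (y := fun n ↦ x (n + 1) ^ (b / 2)) (by positivity) hinit
      (fun n h ↦ rpow_half_add_le_of_sub_ge (hpos _ (by omega)) (hpos _ (by omega)) ha hb1 h
        (hrec _ (by omega))) n
  rintro (_ | n) hn
  · omega
  have hlin : 2 / 5 * (a * ↑(n + 1)) ≤ x (n + 1) ^ (b / 2) := by
    push_cast
    linarith [hgrowth n]
  have hconst : (1 : ℝ) / 8 ≤ (2 / 5) ^ (2 / b) :=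
    calc (1 : ℝ) / 8 ≤ (2 / 5) ^ (2 : ℝ) := by norm_num
      _ ≤ (2 / 5) ^ (2 / b) :=
        rpow_le_rpow_of_exponent_ge (by norm_num) (by norm_num) (by rw [div_le_iff₀ hb0]; linarith)
  calc (a * ↑(n + 1)) ^ (2 / b) / 8 ≤ (2 / 5) ^ (2 / b) * (a * ↑(n + 1)) ^ (2 / b) := by
        nlinarith [rpow_nonneg (by positivity : (0 : ℝ) ≤ a * ↑(n + 1)) (2 / b)]
    _ = (2 / 5 * (a * ↑(n + 1))) ^ (2 / b) := (mul_rpow (by norm_num) (by positivity)).symm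
    _ ≤ (x (n + 1) ^ (b / 2)) ^ (2 / b) := by gcongr
    _ = x (n + 1) := by
        rw [← inv_div b 2, rpow_rpow_inv (hpos _ hn).le (by positivity)]

/-- If a positive sequence satisfies `x_{n+1} − x_n ≥ a·x_n^{(2−b)/2}` for all `n ≥ 1`,
with `a > 0`, `1 ≤ b ≤ 2` and `x_1^{b/2} ≥ a`, then `x_n ≥ (a·n)^{2/b}/8` for all
`n ≥ 1`. -/
theorem stmt_16 (x : ℕ → ℝ) (a b : ℝ) (ha : 0 < a) (hb1 : 1 ≤ b) (hb2 : b ≤ 2)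
    (hpos : ∀ n, 1 ≤ n → 0 < x n)
    (hrec : ∀ n, 1 ≤ n → x (n + 1) - x n ≥ a * x n ^ ((2 - b) / 2))
    (hinit : x 1 ^ (b / 2) ≥ a) :
    ∀ n, 1 ≤ n → x n ≥ (a * n) ^ (2 / b) / 8 :=
  stmt_16_general x a b ha hb1 hpos hrec hinit
end
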